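/- arXiv:2012.15481 — 2 statements merged into one kernel-verified Lean document; each statement's English description precedes it below -/
import Mathlib

section
/- Let Q be a stochastic rate matrix on a finite set S (off-diagonal entries nonnegative, rows summing to zero) and let V : S → ℝ be strictly positive. Then for every α ∈ (0,1] and every i ∈ S, ∑_j Q i j · (V j)^α ≤ α · (V i)^(α-1) · ∑_j Q i j · V j. -/
lemma concave_rpow_ineq {x y α : ℝ} (hx : 0 < x) (hy : 0 < y) (hα0 : 0 < α) (hα1 : α ≤ 1) :
    y ^ α - x ^ α ≤ α * x ^ (α - 1) * (y - x) := by
  have hs : (-1 : ℝ) ≤ y / x - 1 := by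
    have : 0 ≤ y / x := le_of_lt (div_pos hy hx)
    linarith
  have h := rpow_one_add_le_one_add_mul_self hs hα0.le hα1
  have h1 : (1 + (y / x - 1)) = y / x := by ring
  rw [h1] at h
  have hxpow : 0 < x ^ α := Real.rpow_pos_of_pos hx α
  have h2 : (y / x) ^ α = y ^ α / x ^ α := Real.div_rpow hy.le hx.le α
  rw [h2] at h
  have h3 : y ^ α ≤ x ^ α * (1 + α * (y / x - 1)) := by
    rw [div_le_iff₀ hxpow] at h; linarith [h]
  have h4 : x ^ α * (y / x - 1) = x ^ (α - 1) * (y - x) := by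
    rw [Real.rpow_sub hx, Real.rpow_one]
    field_simp
  nlinarith [h3, h4]

theorem stmt_3 {S : Type*} [Fintype S] [DecidableEq S]
    (Q : S → S → ℝ) (hQ : ∀ i j, i ≠ j → 0 ≤ Q i j)
    (hQrow : ∀ i, ∑ j, Q i j = 0)
    (V : S → ℝ) (hV : ∀ i, 0 < V i)
    (α : ℝ) (hα0 : 0 < α) (hα1 : α ≤ 1) :
    ∀ i, ∑ j, Q i j * (V j) ^ α ≤ α * (V i) ^ (α - 1) * ∑ j, Q i j * V j := by
  intro i
  have key : ∑ j, Q i j * ((V j) ^ α - (V i) ^ α) ≤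
      ∑ j, Q i j * (α * (V i) ^ (α - 1) * (V j - V i)) := by
    apply Finset.sum_le_sum
    intro j _
    rcases eq_or_ne i j with rfl | hij
    · simp
    · exact mul_le_mul_of_nonneg_left
        (concave_rpow_ineq (hV i) (hV j) hα0 hα1) (hQ i j hij)
  have e1 : ∑ j, Q i j * ((V j) ^ α - (V i) ^ α) =
      ∑ j, Q i j * (V j) ^ α - (∑ j, Q i j) * (V i) ^ α := by
    rw [Finset.sum_mul, ← Finset.sum_sub_distrib]
    exact Finset.sum_congr rfl fun j _ => by ring
  have e2 : ∑ j, Q i j * (α * (V i) ^ (α - 1) * (V j - V i)) =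
      α * (V i) ^ (α - 1) * (∑ j, Q i j * V j - (∑ j, Q i j) * V i) := by
    rw [mul_sub, Finset.mul_sum, Finset.sum_mul, Finset.mul_sum, ← Finset.sum_sub_distrib]
    exact Finset.sum_congr rfl fun j _ => by ring
  rw [e1, e2, hQrow i] at key
  simpa using key
end

section
/- Let φ₁, φ₂ : ℝ → ℝ be twice differentiable with φ₁(x) > 0 and φ₂(x) > 0 for all x, let θ ∈ [0,1], and define f = φ₁^θ · φ₂^(1-θ). Then f is twice differentiable, f > 0, and for every x, f''(x)/f(x) ≤ θ · φ₁''(x)/φ₁(x) + (1-θ) · φ₂''(x)/φ₂(x). -/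
/-!
Since `f''/f = (log f)'' + ((log f)')²` and `(log f)' = θ (log φ₁)' + (1 - θ) (log φ₂)'`, the
linear parts of `f''/f` and of `θ φ₁''/φ₁ + (1 - θ) φ₂''/φ₂` agree, and the quadratic parts
compare by convexity of the square: `(θ u + (1 - θ) v)² ≤ θ u² + (1 - θ) v²`.
-/

open Real Filter Topology

section LogDeriv

variable {g : ℝ → ℝ} {x : ℝ}

theorem hasDerivAt_logDeriv (hg : DifferentiableAt ℝ g x)
    (hg' : DifferentiableAt ℝ (deriv g) x) (hx : g x ≠ 0) :
    HasDerivAt (logDeriv g) (deriv (deriv g) x / g x - logDeriv g x ^ 2) x := by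
  refine (hg'.hasDerivAt.div hg.hasDerivAt hx).congr_deriv ?_
  rw [logDeriv_apply]
  field_simp

theorem deriv_deriv_div_eq_deriv_logDeriv_add_sq (hg : DifferentiableAt ℝ g x)
    (hg' : DifferentiableAt ℝ (deriv g) x) (hx : g x ≠ 0) :
    deriv (deriv g) x / g x = deriv (logDeriv g) x + logDeriv g x ^ 2 := by
  rw [(hasDerivAt_logDeriv hg hg' hx).deriv]
  ring

theorem deriv_eq_mul_logDeriv (hx : g x ≠ 0) : deriv g x = g x * logDeriv g x := by
  rw [logDeriv_apply, mul_div_cancel₀ _ hx]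

/-- Positivity of `g x` is needed: for `g x < 0` the real power `g x ^ p` may vanish. -/
theorem logDeriv_fun_rpow_const (hg : DifferentiableAt ℝ g x) (hx : 0 < g x) (p : ℝ) :
    logDeriv (fun y => g y ^ p) x = p * logDeriv g x := by
  rw [logDeriv_apply, logDeriv_apply, (hg.hasDerivAt.rpow_const (Or.inl hx.ne')).deriv,
    rpow_sub_one hx.ne']
  field_simp

end LogDeriv

theorem sq_convex_comb_le {θ : ℝ} (hθ0 : 0 ≤ θ) (hθ1 : θ ≤ 1) (u v : ℝ) :
    (θ * u + (1 - θ) * v) ^ 2 ≤ θ * u ^ 2 + (1 - θ) * v ^ 2 :=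
  even_two.convexOn_pow.2 (Set.mem_univ u) (Set.mem_univ v) hθ0 (sub_nonneg.2 hθ1) (by ring)

theorem deriv_deriv_div_le_of_logDeriv_eventuallyEq {f g₁ g₂ : ℝ → ℝ} {θ x : ℝ}
    (hθ0 : 0 ≤ θ) (hθ1 : θ ≤ 1)
    (hf : DifferentiableAt ℝ f x) (hf' : DifferentiableAt ℝ (deriv f) x) (hfx : f x ≠ 0)
    (hg₁ : DifferentiableAt ℝ g₁ x) (hg₁' : DifferentiableAt ℝ (deriv g₁) x) (hg₁x : g₁ x ≠ 0)
    (hg₂ : DifferentiableAt ℝ g₂ x) (hg₂' : DifferentiableAt ℝ (deriv g₂) x) (hg₂x : g₂ x ≠ 0)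
    (hlog : logDeriv f =ᶠ[𝓝 x] fun y => θ * logDeriv g₁ y + (1 - θ) * logDeriv g₂ y) :
    deriv (deriv f) x / f x
      ≤ θ * (deriv (deriv g₁) x / g₁ x) + (1 - θ) * (deriv (deriv g₂) x / g₂ x) := by
  have hL₁ := hasDerivAt_logDeriv hg₁ hg₁' hg₁x
  have hL₂ := hasDerivAt_logDeriv hg₂ hg₂' hg₂x
  rw [deriv_deriv_div_eq_deriv_logDeriv_add_sq hf hf' hfx, hlog.deriv_eq, hlog.eq_of_nhds,
    ((hL₁.const_mul θ).fun_add (hL₂.const_mul (1 - θ))).deriv]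
  nlinarith [sq_convex_comb_le hθ0 hθ1 (logDeriv g₁ x) (logDeriv g₂ x)]

section RpowMulRpow

variable {φ₁ φ₂ : ℝ → ℝ} (a b : ℝ)

theorem differentiableAt_rpow_mul_rpow {x : ℝ} (h₁ : DifferentiableAt ℝ φ₁ x)
    (h₂ : DifferentiableAt ℝ φ₂ x) (hp₁ : 0 < φ₁ x) (hp₂ : 0 < φ₂ x) :
    DifferentiableAt ℝ (fun y => φ₁ y ^ a * φ₂ y ^ b) x :=
  (h₁.rpow_const (Or.inl hp₁.ne')).mul (h₂.rpow_const (Or.inl hp₂.ne'))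

theorem logDeriv_rpow_mul_rpow {x : ℝ} (h₁ : DifferentiableAt ℝ φ₁ x)
    (h₂ : DifferentiableAt ℝ φ₂ x) (hp₁ : 0 < φ₁ x) (hp₂ : 0 < φ₂ x) :
    logDeriv (fun y => φ₁ y ^ a * φ₂ y ^ b) x = a * logDeriv φ₁ x + b * logDeriv φ₂ x := by
  rw [logDeriv_mul x (rpow_pos_of_pos hp₁ a).ne' (rpow_pos_of_pos hp₂ b).ne'
    (h₁.rpow_const (Or.inl hp₁.ne')) (h₂.rpow_const (Or.inl hp₂.ne')),
    logDeriv_fun_rpow_const h₁ hp₁, logDeriv_fun_rpow_const h₂ hp₂]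

theorem differentiable_deriv_rpow_mul_rpow (h₁ : Differentiable ℝ φ₁)
    (h₁' : Differentiable ℝ (deriv φ₁)) (h₂ : Differentiable ℝ φ₂)
    (h₂' : Differentiable ℝ (deriv φ₂)) (hp₁ : ∀ x, 0 < φ₁ x) (hp₂ : ∀ x, 0 < φ₂ x) :
    Differentiable ℝ (deriv fun y => φ₁ y ^ a * φ₂ y ^ b) := by
  have hderiv : deriv (fun y => φ₁ y ^ a * φ₂ y ^ b)
      = fun y => (φ₁ y ^ a * φ₂ y ^ b) * (a * logDeriv φ₁ y + b * logDeriv φ₂ y) := by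
    funext y
    rw [deriv_eq_mul_logDeriv (by positivity [hp₁ y, hp₂ y]),
      logDeriv_rpow_mul_rpow a b (h₁ y) (h₂ y) (hp₁ y) (hp₂ y)]
  rw [hderiv]
  intro x
  have hL₁ := (hasDerivAt_logDeriv (h₁ x) (h₁' x) (hp₁ x).ne').differentiableAt
  have hL₂ := (hasDerivAt_logDeriv (h₂ x) (h₂' x) (hp₂ x).ne').differentiableAt
  exact (differentiableAt_rpow_mul_rpow a b (h₁ x) (h₂ x) (hp₁ x) (hp₂ x)).mul
    ((hL₁.const_mul a).add (hL₂.const_mul b))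

end RpowMulRpow

theorem stmt_6 (φ₁ φ₂ : ℝ → ℝ) (θ : ℝ)
    (h1 : ∀ x, DifferentiableAt ℝ φ₁ x) (h1' : ∀ x, DifferentiableAt ℝ (deriv φ₁) x)
    (h2 : ∀ x, DifferentiableAt ℝ φ₂ x) (h2' : ∀ x, DifferentiableAt ℝ (deriv φ₂) x)
    (hp1 : ∀ x, 0 < φ₁ x) (hp2 : ∀ x, 0 < φ₂ x)
    (hθ0 : 0 ≤ θ) (hθ1 : θ ≤ 1)
    (f : ℝ → ℝ) (hf : ∀ x, f x = (φ₁ x) ^ θ * (φ₂ x) ^ (1 - θ)) :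
    (∀ x, DifferentiableAt ℝ f x) ∧ (∀ x, DifferentiableAt ℝ (deriv f) x) ∧
    (∀ x, 0 < f x) ∧
    (∀ x, deriv (deriv f) x / f x
      ≤ θ * (deriv (deriv φ₁) x / φ₁ x) + (1 - θ) * (deriv (deriv φ₂) x / φ₂ x)) := by
  obtain rfl : f = fun x => φ₁ x ^ θ * φ₂ x ^ (1 - θ) := funext hf
  have hpos : ∀ x, 0 < φ₁ x ^ θ * φ₂ x ^ (1 - θ) := fun x => by positivity [hp1 x, hp2 x]
  have hdiff : ∀ x, DifferentiableAt ℝ (fun y => φ₁ y ^ θ * φ₂ y ^ (1 - θ)) x := fun x =>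
    differentiableAt_rpow_mul_rpow θ (1 - θ) (h1 x) (h2 x) (hp1 x) (hp2 x)
  have hdiff' := differentiable_deriv_rpow_mul_rpow θ (1 - θ) h1 h1' h2 h2' hp1 hp2
  refine ⟨hdiff, hdiff', hpos, fun x => ?_⟩
  refine deriv_deriv_div_le_of_logDeriv_eventuallyEq hθ0 hθ1 (hdiff x) (hdiff' x) (hpos x).ne'
    (h1 x) (h1' x) (hp1 x).ne' (h2 x) (h2' x) (hp2 x).ne' (Eventually.of_forall fun y => ?_)
  exact logDeriv_rpow_mul_rpow θ (1 - θ) (h1 y) (h2 y) (hp1 y) (hp2 y)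
end
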